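/- arXiv:2209.13119 — 2 statements merged into one kernel-verified Lean document; each statement's English description precedes it below -/
import Mathlib

section
/- Let n and r be nonempty finite types. Let w : n → n → ℝ be a symmetric weight function (w i j = w j i for all i, j) with 0 ≤ w i j, w i i = 0, whose graph is (strongly) connected, and let L be its Laplacian (so L is symmetric). Let Δt : ℝ with 0 < Δt, and set A = Matrix.exp ℝ (-(Δt • L)). Let B : Matrix n r ℝ be an input matrix having at least one nonzero column sum, i.e. there exists j : r with ∑ i, B i j ≠ 0. Then the pair (A, B) is uniformly stabilizable, meaning that the dual pair (Aᵀ, Bᵀ) = (A, Bᵀ) is uniformly detectable: there exist p q : ℕ and a b : ℝ with 0 ≤ a < 1 and 0 < b such that for every ζ : n → ℝ satisfying a * ‖ζ‖ ≤ ‖(A ^ p) *ᵥ ζ‖, one has b * (ζ ⬝ᵥ ζ) ≤ ∑ i in Finset.range (q + 1), (Bᵀ *ᵥ ((A ^ i) *ᵥ ζ)) ⬝ᵥ (Bᵀ *ᵥ ((A ^ i) *ᵥ ζ)). -/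
open Matrix

/-!
The heat kernel `A = exp (-Δt • L)` is symmetric and fixes the constant vector `1`. Since the
graph is connected, the eigenvectors of `L` for the eigenvalue `0` are constant, so on `1ᗮ` the
operator `A` only sees eigenvalues `exp (-Δt λ) < 1`: it contracts squared Euclidean norms there
by some `ρ < 1`.

Write `ζ = c • 1 + z` with `z ⊥ 1`, so that `A ^ k ζ = c • 1 + A ^ k z` with `A ^ k z → 0`. If
`A ^ p` shrinks `ζ` by at most a half and `p` is large, `‖z‖` is bounded by a multiple of `|c|`.
For `q` large, the `j`-th entry of `Bᵀ A ^ q ζ` is then `c s` up to an error of at most `|c s| / 2`,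
where `s ≠ 0` is the `j`-th column sum of `B`; hence it dominates a fixed multiple of `ζ ⬝ᵥ ζ`.
-/

namespace Matrix

variable {n : Type*} [Fintype n]

theorem exp_mulVec_of_mulVec_eq_smul [DecidableEq n] {M : Matrix n n ℝ} {v : n → ℝ} {c : ℝ}
    (h : M *ᵥ v = c • v) : NormedSpace.exp M *ᵥ v = Real.exp c • v := by
  -- `exp` does not depend on the norm; any algebra norm gives access to its power series
  let : NormedRing (Matrix n n ℝ) := Matrix.linftyOpNormedRing
  let : NormedAlgebra ℝ (Matrix n n ℝ) := Matrix.linftyOpNormedAlgebra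
  have hpow : ∀ k : ℕ, M ^ k *ᵥ v = c ^ k • v := fun k => by
    induction k with
    | zero => simp
    | succ k ih => rw [pow_succ, ← mulVec_mulVec, h, mulVec_smul, ih, smul_smul, pow_succ']
  let φ : Matrix n n ℝ →ₗ[ℝ] n → ℝ := (LinearMap.applyₗ v).comp Matrix.toLin'.toLinearMap
  have hM := (NormedSpace.exp_series_hasSum_exp' (𝕂 := ℝ) M).map φ
    φ.continuous_of_finiteDimensional
  have hc := (Real.exp_eq_exp_ℝ ▸ NormedSpace.exp_series_hasSum_exp' (𝕂 := ℝ) c).smul_const v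
  refine hM.unique (hc.congr_fun fun k => ?_)
  change ((k.factorial : ℝ)⁻¹ • M ^ k) *ᵥ v = _
  rw [smul_mulVec, hpow, smul_smul, smul_eq_mul]

theorem dotProduct_self_eq_sum_sq (b : OrthonormalBasis n ℝ (EuclideanSpace ℝ n)) (y : n → ℝ) :
    y ⬝ᵥ y = ∑ j, (b j ⬝ᵥ y) ^ 2 := by
  have := b.sum_sq_inner_right (WithLp.toLp 2 y)
  simp only [EuclideanSpace.inner_eq_star_dotProduct, EuclideanSpace.norm_sq_eq, star_trivial,
    Real.norm_eq_abs, sq_abs, dotProduct_comm y] at this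
  rw [this, dotProduct]
  simp only [sq]

theorem dotProduct_self_mulVec_le_of_eigenbasis {A : Matrix n n ℝ} (hA : A.IsSymm)
    (b : OrthonormalBasis n ℝ (EuclideanSpace ℝ n)) {t : n → ℝ}
    (hb : ∀ j, A *ᵥ b j = t j • b j) {ρ : ℝ} {z : n → ℝ}
    (hz : ∀ j, b j ⬝ᵥ z = 0 ∨ t j ^ 2 ≤ ρ) :
    (A *ᵥ z) ⬝ᵥ (A *ᵥ z) ≤ ρ * (z ⬝ᵥ z) := by
  rw [dotProduct_self_eq_sum_sq b, dotProduct_self_eq_sum_sq b z, Finset.mul_sum]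
  refine Finset.sum_le_sum fun j _ => ?_
  have hcoef : b j ⬝ᵥ (A *ᵥ z) = t j * (b j ⬝ᵥ z) := by
    rw [dotProduct_mulVec, ← hA.eq, vecMul_transpose, hb, smul_dotProduct, smul_eq_mul]
  rw [hcoef, mul_pow]
  rcases hz j with h | h
  · simp [h]
  · exact mul_le_mul_of_nonneg_right h (sq_nonneg _)

theorem PosSemidef.exists_exp_neg_smul_contraction [DecidableEq n] {L : Matrix n n ℝ}
    (hL : L.PosSemidef) (hker : ∀ x, L *ᵥ x = 0 → ∀ i j, x i = x j) {Δt : ℝ} (hΔt : 0 < Δt) :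
    ∃ ρ, 0 ≤ ρ ∧ ρ < 1 ∧ ∀ z, 1 ⬝ᵥ z = 0 →
      (NormedSpace.exp (-(Δt • L)) *ᵥ z) ⬝ᵥ (NormedSpace.exp (-(Δt • L)) *ᵥ z) ≤
        ρ * (z ⬝ᵥ z) := by
  have hLsymm : L.IsSymm := isHermitian_iff_isSymm.1 hL.isHermitian
  set b := hL.isHermitian.eigenvectorBasis
  set e := hL.isHermitian.eigenvalues
  have hbL : ∀ j, L *ᵥ b j = e j • b j := hL.isHermitian.mulVec_eigenvectorBasis
  have hbA : ∀ j, NormedSpace.exp (-(Δt • L)) *ᵥ b j = Real.exp (-(Δt * e j)) • b j :=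
    fun j => exp_mulVec_of_mulVec_eq_smul <| by
      rw [neg_mulVec, smul_mulVec, hbL, smul_smul, neg_smul]
  let g : n → ℝ := fun j => if e j = 0 then 0 else Real.exp (-(Δt * e j)) ^ 2
  have hg : ∀ j, g j ∈ Set.Ico (0 : ℝ) 1 := fun j => by
    by_cases hj : e j = 0
    · simp [g, hj]
    · have hej : 0 < e j := (hL.eigenvalues_nonneg j).lt_of_ne' hj
      refine ⟨by simp only [g, if_neg hj]; positivity, ?_⟩
      simp only [g, if_neg hj, ← Real.exp_nat_mul]
      exact Real.exp_lt_one_iff.2 (by push_cast; nlinarith [mul_pos hΔt hej])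
  obtain ⟨⟨ρ, hρ⟩, hle⟩ := Finite.exists_le fun j => (⟨g j, hg j⟩ : Set.Ico (0 : ℝ) 1)
  refine ⟨ρ, hρ.1, hρ.2, fun z hz => ?_⟩
  refine dotProduct_self_mulVec_le_of_eigenbasis (hLsymm.smul Δt).neg.exp b hbA fun j => ?_
  by_cases hj : e j = 0
  · left
    have hconst := hker (b j) (by rw [hbL, hj, zero_smul])
    calc b j ⬝ᵥ z = b j j * (1 ⬝ᵥ z) := by
          simp only [dotProduct, Pi.one_apply, one_mul, Finset.mul_sum, hconst _ j]
      _ = 0 := by rw [hz, mul_zero]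
  · right
    simpa [g, hj] using Subtype.mk_le_mk.1 (hle j)

end Matrix

section WeightedLaplacian

variable {n : Type*} [Fintype n] [DecidableEq n] (w : n → n → ℝ)

noncomputable def weightedLaplacian : Matrix n n ℝ :=
  Matrix.of fun i j => if i = j then ∑ k, w i k else -(w i j)

variable {w}

theorem weightedLaplacian_eq_diagonal_sub (hdiag : ∀ i, w i i = 0) :
    weightedLaplacian w = diagonal (fun i => ∑ k, w i k) - Matrix.of w := by
  ext i j
  by_cases h : i = j
  · subst h; simp [weightedLaplacian, hdiag]
  · simp [weightedLaplacian, h]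

theorem weightedLaplacian_mulVec_apply (hdiag : ∀ i, w i i = 0) (x : n → ℝ) (i : n) :
    (weightedLaplacian w *ᵥ x) i = ∑ j, w i j * (x i - x j) := by
  rw [weightedLaplacian_eq_diagonal_sub hdiag, sub_mulVec, Pi.sub_apply, mulVec_diagonal,
    Finset.sum_mul]
  simp only [mul_sub, Finset.sum_sub_distrib]
  rfl

theorem weightedLaplacian_mulVec_one (hdiag : ∀ i, w i i = 0) :
    weightedLaplacian w *ᵥ 1 = 0 := by
  ext i
  simp [weightedLaplacian_mulVec_apply hdiag]

theorem weightedLaplacian_isSymm (hsym : ∀ i j, w i j = w j i) :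
    (weightedLaplacian w).IsSymm := by
  refine IsSymm.ext fun i j => ?_
  by_cases h : i = j
  · rw [h]
  · simp [weightedLaplacian, h, Ne.symm h, hsym i j]

theorem dotProduct_weightedLaplacian_mulVec (hsym : ∀ i j, w i j = w j i)
    (hdiag : ∀ i, w i i = 0) (x : n → ℝ) :
    x ⬝ᵥ (weightedLaplacian w *ᵥ x) = (∑ i, ∑ j, w i j * (x i - x j) ^ 2) / 2 := by
  have hform : x ⬝ᵥ (weightedLaplacian w *ᵥ x) = ∑ i, ∑ j, w i j * (x i * (x i - x j)) := by
    simp only [dotProduct, weightedLaplacian_mulVec_apply hdiag, Finset.mul_sum]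
    exact Finset.sum_congr rfl fun i _ => Finset.sum_congr rfl fun j _ => by ring
  have hswap : ∑ i, ∑ j, w i j * (x i * (x i - x j)) =
      ∑ i, ∑ j, w i j * (x j * (x j - x i)) := by
    rw [Finset.sum_comm]
    simp only [hsym]
  have hsplit : ∑ i, ∑ j, w i j * (x i - x j) ^ 2 =
      ∑ i, ∑ j, w i j * (x i * (x i - x j)) + ∑ i, ∑ j, w i j * (x j * (x j - x i)) := by
    rw [← Finset.sum_add_distrib]
    exact Finset.sum_congr rfl fun i _ => by rw [← Finset.sum_add_distrib]; congr 1; ext j; ring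
  rw [hsplit, ← hswap, hform]
  ring

theorem weightedLaplacian_posSemidef (hw : ∀ i j, 0 ≤ w i j) (hsym : ∀ i j, w i j = w j i)
    (hdiag : ∀ i, w i i = 0) : (weightedLaplacian w).PosSemidef := by
  refine .of_dotProduct_mulVec_nonneg
    (isHermitian_iff_isSymm.2 (weightedLaplacian_isSymm hsym)) fun x => ?_
  rw [star_trivial, dotProduct_weightedLaplacian_mulVec hsym hdiag]
  exact div_nonneg (Finset.sum_nonneg fun i _ => Finset.sum_nonneg fun j _ =>
    mul_nonneg (hw i j) (sq_nonneg _)) zero_le_two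

theorem apply_eq_of_weightedLaplacian_mulVec_eq_zero (hw : ∀ i j, 0 ≤ w i j)
    (hsym : ∀ i j, w i j = w j i) (hdiag : ∀ i, w i i = 0)
    (hconn : ∀ i j, Relation.ReflTransGen (fun a b => 0 < w a b) i j) {x : n → ℝ}
    (hx : weightedLaplacian w *ᵥ x = 0) (i j : n) : x i = x j := by
  have hterm_nonneg : ∀ a b, 0 ≤ w a b * (x a - x b) ^ 2 := fun a b =>
    mul_nonneg (hw a b) (sq_nonneg _)
  have hsum : ∑ a, ∑ b, w a b * (x a - x b) ^ 2 = 0 := by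
    have := dotProduct_weightedLaplacian_mulVec hsym hdiag x
    rw [hx, dotProduct_zero] at this
    linarith
  have hterm : ∀ a b, w a b * (x a - x b) ^ 2 = 0 := fun a b => by
    have hrow := (Finset.sum_eq_zero_iff_of_nonneg fun a _ =>
      Finset.sum_nonneg fun b _ => hterm_nonneg a b).1 hsum a (Finset.mem_univ a)
    exact (Finset.sum_eq_zero_iff_of_nonneg fun b _ => hterm_nonneg a b).1 hrow b
      (Finset.mem_univ b)
  have hedge : ∀ a b, 0 < w a b → x a = x b := fun a b hab => by
    have := (mul_eq_zero.1 (hterm a b)).resolve_left hab.ne'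
    exact sub_eq_zero.1 (pow_eq_zero_iff two_ne_zero |>.1 this)
  induction hconn i j with
  | refl => rfl
  | tail _ hbc ih => exact ih.trans (hedge _ _ hbc)

end WeightedLaplacian

section Detectability

variable {n r : Type*} [Fintype n]

def UniformlyDetectable [DecidableEq n] [Fintype r] (A : Matrix n n ℝ) (C : Matrix r n ℝ) :
    Prop :=
  ∃ p q : ℕ, ∃ a b : ℝ, 0 ≤ a ∧ a < 1 ∧ 0 < b ∧
    ∀ ζ : n → ℝ, a * ‖ζ‖ ≤ ‖(A ^ p) *ᵥ ζ‖ →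
      b * (ζ ⬝ᵥ ζ) ≤ ∑ i ∈ Finset.range (q + 1),
        (C *ᵥ ((A ^ i) *ᵥ ζ)) ⬝ᵥ (C *ᵥ ((A ^ i) *ᵥ ζ))

theorem sq_apply_le_dotProduct_self (y : n → ℝ) (i : n) : y i ^ 2 ≤ y ⬝ᵥ y := by
  simpa [sq, dotProduct] using
    Finset.single_le_sum (fun k _ => mul_self_nonneg (y k)) (Finset.mem_univ i)

theorem sq_norm_le_dotProduct_self (y : n → ℝ) : ‖y‖ ^ 2 ≤ y ⬝ᵥ y := by
  have hy : 0 ≤ y ⬝ᵥ y := Finset.sum_nonneg fun i _ => mul_self_nonneg (y i)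
  refine (Real.le_sqrt (norm_nonneg y) hy).1 ((pi_norm_le_iff_of_nonneg (Real.sqrt_nonneg _)).2
    fun i => ?_)
  rw [Real.norm_eq_abs]
  exact Real.abs_le_sqrt (sq_apply_le_dotProduct_self y i)

theorem dotProduct_self_le_card_mul_sq_norm (y : n → ℝ) :
    y ⬝ᵥ y ≤ Fintype.card n * ‖y‖ ^ 2 := by
  calc y ⬝ᵥ y = ∑ i, |y i| ^ 2 := by simp [dotProduct, sq]
    _ ≤ ∑ _i : n, ‖y‖ ^ 2 := Finset.sum_le_sum fun i _ =>
        pow_le_pow_left₀ (abs_nonneg _) (by simpa using norm_le_pi_norm y i) 2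
    _ = Fintype.card n * ‖y‖ ^ 2 := by simp

theorem sq_apply_le_sum_range_dotProduct_self [Fintype r] (f : ℕ → r → ℝ) (q : ℕ) (j : r) :
    f q j ^ 2 ≤ ∑ i ∈ Finset.range (q + 1), f i ⬝ᵥ f i :=
  calc f q j ^ 2 ≤ f q ⬝ᵥ f q := sq_apply_le_dotProduct_self (f q) j
    _ ≤ ∑ i ∈ Finset.range (q + 1), f i ⬝ᵥ f i :=
        Finset.single_le_sum (f := fun i => f i ⬝ᵥ f i)
          (fun i _ => Finset.sum_nonneg fun k _ => mul_self_nonneg (f i k))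
          (Finset.self_mem_range_succ q)

theorem exists_eq_smul_one_add [Nonempty n] (ζ : n → ℝ) :
    ∃ (c : ℝ) (z : n → ℝ), 1 ⬝ᵥ z = 0 ∧ ζ = c • 1 + z := by
  refine ⟨(1 ⬝ᵥ ζ) / Fintype.card n, ζ - ((1 ⬝ᵥ ζ) / Fintype.card n) • 1, ?_, by abel⟩
  rw [dotProduct_sub, dotProduct_smul, one_dotProduct_one, smul_eq_mul,
    div_mul_cancel₀ _ (by positivity), sub_self]

theorem dotProduct_self_smul_one_add {z : n → ℝ} (hz : 1 ⬝ᵥ z = 0) (c : ℝ) :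
    (c • (1 : n → ℝ) + z) ⬝ᵥ (c • 1 + z) = Fintype.card n * c ^ 2 + z ⬝ᵥ z := by
  simp only [add_dotProduct, dotProduct_add, smul_dotProduct, dotProduct_smul,
    one_dotProduct_one, hz, dotProduct_comm z 1, smul_eq_mul]
  ring

theorem dotProduct_self_le_of_half_norm_le [Nonempty n] {M : Matrix n n ℝ} (hM : M *ᵥ 1 = 1)
    {c : ℝ} {z : n → ℝ} (hMz : 1 ⬝ᵥ (M *ᵥ z) = 0)
    (hcontr : 8 * (Fintype.card n : ℝ) * ((M *ᵥ z) ⬝ᵥ (M *ᵥ z)) ≤ z ⬝ᵥ z)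
    (hz : 1 ⬝ᵥ z = 0) (h : 1 / 2 * ‖c • 1 + z‖ ≤ ‖M *ᵥ (c • 1 + z)‖) :
    z ⬝ᵥ z ≤ 8 * (Fintype.card n : ℝ) ^ 2 * c ^ 2 := by
  set N : ℝ := (Fintype.card n : ℝ)
  have hN : 1 ≤ N := Nat.one_le_cast.2 Fintype.card_pos
  have hupper : ‖M *ᵥ (c • 1 + z)‖ ^ 2 ≤ N * c ^ 2 + (M *ᵥ z) ⬝ᵥ (M *ᵥ z) := by
    rw [mulVec_add, mulVec_smul, hM, ← dotProduct_self_smul_one_add hMz]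
    exact sq_norm_le_dotProduct_self _
  have hlower : N * c ^ 2 + z ⬝ᵥ z ≤ N * ‖c • 1 + z‖ ^ 2 := by
    rw [← dotProduct_self_smul_one_add hz]
    exact dotProduct_self_le_card_mul_sq_norm _
  have hhalf : ‖c • 1 + z‖ ^ 2 ≤ 4 * ‖M *ᵥ (c • 1 + z)‖ ^ 2 := by
    nlinarith [norm_nonneg (c • (1 : n → ℝ) + z)]
  nlinarith [sq_nonneg c]

theorem sq_dotProduct_le (u v : n → ℝ) : (u ⬝ᵥ v) ^ 2 ≤ (u ⬝ᵥ u) * (v ⬝ᵥ v) := by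
  simpa [dotProduct, sq] using Finset.sum_mul_sq_le_sq_mul_sq Finset.univ u v

theorem sq_mul_le_four_mul_sq_mulVec_apply {C : Matrix r n ℝ} {M : Matrix n n ℝ}
    (hM : M *ᵥ 1 = 1) (j : r) (c : ℝ) {z : n → ℝ}
    (hMz : 4 * (C j ⬝ᵥ C j) * ((M *ᵥ z) ⬝ᵥ (M *ᵥ z)) ≤ ((C *ᵥ 1) j * c) ^ 2) :
    ((C *ᵥ 1) j * c) ^ 2 ≤ 4 * (C *ᵥ (M *ᵥ (c • 1 + z))) j ^ 2 := by
  set a := (C *ᵥ 1) j * c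
  set d := (C *ᵥ (M *ᵥ z)) j
  have hsplit : (C *ᵥ (M *ᵥ (c • 1 + z))) j = a + d := by
    simp only [mulVec_add, mulVec_smul, hM, Pi.add_apply, Pi.smul_apply, smul_eq_mul, a, d]
    ring
  have hd : d ^ 2 ≤ (C j ⬝ᵥ C j) * ((M *ᵥ z) ⬝ᵥ (M *ᵥ z)) := sq_dotProduct_le _ _
  rw [hsplit]
  nlinarith [sq_nonneg (a + 2 * d)]

theorem exists_mul_pow_le {ρ : ℝ} (hρ0 : 0 ≤ ρ) (hρ1 : ρ < 1) (K : ℝ) {ε : ℝ} (hε : 0 < ε) :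
    ∃ k : ℕ, K * ρ ^ k ≤ ε := by
  have := (tendsto_pow_atTop_nhds_zero_of_lt_one hρ0 hρ1).const_mul K
  rw [mul_zero] at this
  exact (this.eventually (ge_mem_nhds hε)).exists

variable [DecidableEq n]

theorem pow_mulVec_eq_self {A : Matrix n n ℝ} {v : n → ℝ} (h : A *ᵥ v = v) (k : ℕ) :
    A ^ k *ᵥ v = v := by
  induction k with
  | zero => simp
  | succ k ih => rw [pow_succ, ← mulVec_mulVec, h, ih]

theorem vecMul_pow_eq_self {A : Matrix n n ℝ} {v : n → ℝ} (h : v ᵥ* A = v) (k : ℕ) :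
    v ᵥ* A ^ k = v := by
  induction k with
  | zero => simp
  | succ k ih => rw [pow_succ, ← vecMul_vecMul, ih, h]

theorem dotProduct_self_pow_mulVec_le {A : Matrix n n ℝ} (hA : 1 ᵥ* A = 1) {ρ : ℝ}
    (hρ : 0 ≤ ρ) (hcontr : ∀ z, 1 ⬝ᵥ z = 0 → (A *ᵥ z) ⬝ᵥ (A *ᵥ z) ≤ ρ * (z ⬝ᵥ z)) (k : ℕ)
    {z : n → ℝ} (hz : 1 ⬝ᵥ z = 0) : (A ^ k *ᵥ z) ⬝ᵥ (A ^ k *ᵥ z) ≤ ρ ^ k * (z ⬝ᵥ z) := by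
  induction k with
  | zero => simp
  | succ k ih =>
    have hAkz : 1 ⬝ᵥ (A ^ k *ᵥ z) = 0 := by rw [dotProduct_mulVec, vecMul_pow_eq_self hA, hz]
    rw [pow_succ', ← mulVec_mulVec, pow_succ', mul_assoc]
    exact (hcontr _ hAkz).trans (mul_le_mul_of_nonneg_left ih hρ)

theorem uniformlyDetectable_of_contraction [Fintype r] {A : Matrix n n ℝ} (hA : A *ᵥ 1 = 1)
    (hA' : 1 ᵥ* A = 1) {ρ : ℝ} (hρ0 : 0 ≤ ρ) (hρ1 : ρ < 1)
    (hcontr : ∀ z, 1 ⬝ᵥ z = 0 → (A *ᵥ z) ⬝ᵥ (A *ᵥ z) ≤ ρ * (z ⬝ᵥ z))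
    {C : Matrix r n ℝ} {j : r} (hC : (C *ᵥ 1) j ≠ 0) : UniformlyDetectable A C := by
  have : Nonempty n := by
    rcases isEmpty_or_nonempty n with h | h
    · exact absurd (by rw [Subsingleton.elim (1 : n → ℝ) 0, mulVec_zero]; rfl) hC
    · exact h
  set N : ℝ := (Fintype.card n : ℝ)
  set s := (C *ᵥ 1) j
  have hN : 0 < N := Nat.cast_pos.2 Fintype.card_pos
  obtain ⟨p, hp⟩ := exists_mul_pow_le hρ0 hρ1 (8 * N) one_pos
  obtain ⟨q, hq⟩ :=
    exists_mul_pow_le hρ0 hρ1 (4 * (C j ⬝ᵥ C j) * (8 * N ^ 2)) (sq_pos_of_ne_zero hC)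
  refine ⟨p, q, 1 / 2, s ^ 2 / (4 * (N + 8 * N ^ 2)), by norm_num, by norm_num, by positivity,
    fun ζ hζ => ?_⟩
  obtain ⟨c, z, hz, rfl⟩ := exists_eq_smul_one_add ζ
  have hpow : ∀ k, 1 ⬝ᵥ (A ^ k *ᵥ z) = 0 ∧
      (A ^ k *ᵥ z) ⬝ᵥ (A ^ k *ᵥ z) ≤ ρ ^ k * (z ⬝ᵥ z) :=
    fun k => ⟨by rw [dotProduct_mulVec, vecMul_pow_eq_self hA', hz],
      dotProduct_self_pow_mulVec_le hA' hρ0 hcontr k hz⟩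
  have hZ : 0 ≤ z ⬝ᵥ z := Finset.sum_nonneg fun i _ => mul_self_nonneg (z i)
  have hzc : z ⬝ᵥ z ≤ 8 * N ^ 2 * c ^ 2 :=
    dotProduct_self_le_of_half_norm_le (pow_mulVec_eq_self hA p) (hpow p).1
      (by nlinarith [(hpow p).2]) hz hζ
  have hW : 0 ≤ C j ⬝ᵥ C j := Finset.sum_nonneg fun i _ => mul_self_nonneg (C j i)
  have hobs := sq_mul_le_four_mul_sq_mulVec_apply (pow_mulVec_eq_self hA q) j c <|
    calc 4 * (C j ⬝ᵥ C j) * ((A ^ q *ᵥ z) ⬝ᵥ (A ^ q *ᵥ z))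
        ≤ 4 * (C j ⬝ᵥ C j) * (ρ ^ q * (8 * N ^ 2 * c ^ 2)) := by
          gcongr
          exact (hpow q).2.trans (by gcongr)
      _ = 4 * (C j ⬝ᵥ C j) * (8 * N ^ 2) * ρ ^ q * c ^ 2 := by ring
      _ ≤ s ^ 2 * c ^ 2 := by gcongr
      _ = (s * c) ^ 2 := by ring
  calc s ^ 2 / (4 * (N + 8 * N ^ 2)) * ((c • 1 + z) ⬝ᵥ (c • 1 + z))
      = s ^ 2 / (4 * (N + 8 * N ^ 2)) * (N * c ^ 2 + z ⬝ᵥ z) := by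
        rw [dotProduct_self_smul_one_add hz]
    _ ≤ s ^ 2 / (4 * (N + 8 * N ^ 2)) * ((N + 8 * N ^ 2) * c ^ 2) := by
        gcongr
        linarith
    _ = (s * c) ^ 2 / 4 := by field_simp
    _ ≤ (C *ᵥ (A ^ q *ᵥ (c • 1 + z))) j ^ 2 := by linarith
    _ ≤ _ := sq_apply_le_sum_range_dotProduct_self (fun i => C *ᵥ (A ^ i *ᵥ (c • 1 + z))) _ _

end Detectability

theorem laplacian_exp_uniformly_stabilizable_general
    {n r : Type*} [Fintype n] [DecidableEq n] [Fintype r]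
    (w : n → n → ℝ) (hw : ∀ i j, 0 ≤ w i j) (hsym : ∀ i j, w i j = w j i)
    (hdiag : ∀ i, w i i = 0)
    (hconn : ∀ i j, Relation.ReflTransGen (fun a b => 0 < w a b) i j)
    (L : Matrix n n ℝ)
    (hL : ∀ i j, L i j = if i = j then ∑ k, w i k else -(w i j))
    (Δt : ℝ) (hΔt : 0 < Δt)
    (A : Matrix n n ℝ) (hA : A = NormedSpace.exp (-(Δt • L)))
    (B : Matrix n r ℝ) (hB : ∃ j, ∑ i, B i j ≠ 0) :
    ∃ p q : ℕ, ∃ a b : ℝ, 0 ≤ a ∧ a < 1 ∧ 0 < b ∧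
      ∀ ζ : n → ℝ, a * ‖ζ‖ ≤ ‖(A ^ p) *ᵥ ζ‖ →
        b * (ζ ⬝ᵥ ζ) ≤ ∑ i ∈ Finset.range (q + 1),
          (Bᵀ *ᵥ ((A ^ i) *ᵥ ζ)) ⬝ᵥ (Bᵀ *ᵥ ((A ^ i) *ᵥ ζ)) := by
  obtain rfl : L = weightedLaplacian w := Matrix.ext hL
  obtain ⟨ρ, hρ0, hρ1, hcontr⟩ :=
    (weightedLaplacian_posSemidef hw hsym hdiag).exists_exp_neg_smul_contraction
      (fun _ hx => apply_eq_of_weightedLaplacian_mulVec_eq_zero hw hsym hdiag hconn hx) hΔt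
  subst hA
  have hsymm := ((weightedLaplacian_isSymm hsym).smul Δt).neg.exp
  have hfix : NormedSpace.exp (-(Δt • weightedLaplacian w)) *ᵥ 1 = 1 := by
    rw [exp_mulVec_of_mulVec_eq_smul (c := 0), Real.exp_zero, one_smul]
    rw [neg_mulVec, smul_mulVec, weightedLaplacian_mulVec_one hdiag, smul_zero, neg_zero,
      zero_smul]
  obtain ⟨j, hj⟩ := hB
  exact uniformlyDetectable_of_contraction hfix (by rw [← mulVec_transpose, hsymm.eq, hfix])
    hρ0 hρ1 hcontr (j := j) (by simpa [mulVec, dotProduct] using hj)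

/-- For the Laplacian `L` of a connected symmetric weighted graph,
`A = exp(-(Δt • L))` together with any input matrix `B` with a nonzero column sum
forms a uniformly stabilizable pair, i.e. `(Aᵀ, Bᵀ) = (A, Bᵀ)` is uniformly detectable. -/
theorem laplacian_exp_uniformly_stabilizable
    {n r : Type*} [Fintype n] [Nonempty n] [DecidableEq n] [Fintype r] [Nonempty r]
    (w : n → n → ℝ) (hw : ∀ i j, 0 ≤ w i j) (hsym : ∀ i j, w i j = w j i)
    (hdiag : ∀ i, w i i = 0)
    (hconn : ∀ i j, Relation.ReflTransGen (fun a b => 0 < w a b) i j)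
    (L : Matrix n n ℝ)
    (hL : ∀ i j, L i j = if i = j then ∑ k, w i k else -(w i j))
    (Δt : ℝ) (hΔt : 0 < Δt)
    (A : Matrix n n ℝ) (hA : A = NormedSpace.exp (-(Δt • L)))
    (B : Matrix n r ℝ) (hB : ∃ j, ∑ i, B i j ≠ 0) :
    ∃ p q : ℕ, ∃ a b : ℝ, 0 ≤ a ∧ a < 1 ∧ 0 < b ∧
      ∀ ζ : n → ℝ, a * ‖ζ‖ ≤ ‖(A ^ p) *ᵥ ζ‖ →
        b * (ζ ⬝ᵥ ζ) ≤ ∑ i ∈ Finset.range (q + 1),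
          (Bᵀ *ᵥ ((A ^ i) *ᵥ ζ)) ⬝ᵥ (Bᵀ *ᵥ ((A ^ i) *ᵥ ζ)) :=
  laplacian_exp_uniformly_stabilizable_general w hw hsym hdiag hconn L hL Δt hΔt A hA B hB
end

section
/- Let n be a nonempty finite type. Let w : n → n → ℝ be a weight function with 0 ≤ w i j for all i, j and w i i = 0, whose graph is strongly connected, and let L be its Laplacian. Then every entry of the matrix exponential of -L is strictly positive: for all i, j, 0 < (Matrix.exp ℝ (-L)) i j. -/
/-!
Adding a large multiple `c • 1` to a matrix `M` with nonnegative off-diagonal entries makes it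
entrywise nonnegative without changing `exp M` beyond the positive factor `e^{-c}`. For a
nonnegative matrix `A`, a path of positive entries from `i` to `j` of length `k` gives
`0 < (A ^ k) i j`, and this single term of the exponential series already makes `exp A i j`
positive.
-/

namespace Matrix

variable {n : Type*} [Fintype n] [DecidableEq n]

theorem exists_pow_apply_pos_of_reflTransGen {R : Type*} [Semiring R] [PartialOrder R]
    [IsStrictOrderedRing R] {A : Matrix n n R} (hA : ∀ i j, 0 ≤ A i j) {i j : n}
    (h : Relation.ReflTransGen (fun a b => 0 < A a b) i j) : ∃ k, 0 < (A ^ k) i j := by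
  induction h with
  | refl => exact ⟨0, by simp⟩
  | @tail b c _ hbc ih =>
    obtain ⟨k, hk⟩ := ih
    refine ⟨k + 1, ?_⟩
    rw [pow_succ, mul_apply]
    exact Finset.sum_pos' (fun l _ => mul_nonneg (pow_apply_nonneg hA k i l) (hA l c))
      ⟨b, Finset.mem_univ b, mul_pos hk hbc⟩

theorem exp_apply_pos_of_pow_apply_pos {A : Matrix n n ℝ} (hA : ∀ i j, 0 ≤ A i j) {i j : n}
    {k : ℕ} (hk : 0 < (A ^ k) i j) : 0 < NormedSpace.exp A i j := by
  let _ : NormedRing (Matrix n n ℝ) := Matrix.linftyOpNormedRing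
  let _ : NormedAlgebra ℝ (Matrix n n ℝ) := Matrix.linftyOpNormedAlgebra
  have hsum :
      HasSum (fun m : ℕ => (m.factorial : ℝ)⁻¹ * (A ^ m) i j) (NormedSpace.exp A i j) :=
    Pi.hasSum.mp (Pi.hasSum.mp (NormedSpace.exp_series_hasSum_exp' (𝕂 := ℝ) A) i) j
  calc 0 < (k.factorial : ℝ)⁻¹ * (A ^ k) i j := by positivity
    _ ≤ NormedSpace.exp A i j :=
      le_hasSum hsum k fun m _ => mul_nonneg (by positivity) (pow_apply_nonneg hA m i j)

theorem exp_add_smul_one {𝕂 : Type*} [RCLike 𝕂] (A : Matrix n n 𝕂) (c : 𝕂) :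
    NormedSpace.exp (A + c • 1) = NormedSpace.exp c • NormedSpace.exp A := by
  let _ : NormedRing (Matrix n n 𝕂) := Matrix.linftyOpNormedRing
  let _ : NormedAlgebra 𝕂 (Matrix n n 𝕂) := Matrix.linftyOpNormedAlgebra
  rw [exp_add_of_commute _ _ ((Commute.one_right A).smul_right c), smul_one_eq_diagonal,
    exp_diagonal]
  ext i j
  simp [mul_diagonal, mul_comm]

theorem exp_apply_pos_of_reflTransGen {M : Matrix n n ℝ} (hM : ∀ i j, i ≠ j → 0 ≤ M i j)
    {i j : n} (h : Relation.ReflTransGen (fun a b => 0 < M a b) i j) :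
    0 < NormedSpace.exp M i j := by
  obtain ⟨c, hc⟩ := (Set.finite_range fun i => -M i i).bddAbove
  set A := M + (c + 1) • 1
  have hA_apply : ∀ a b, A a b = if a = b then M a a + (c + 1) else M a b := by
    intro a b; split_ifs <;> simp [A, *]
  have hA_diag : ∀ a, 0 < A a a := fun a => by
    have := hc ⟨a, rfl⟩
    rw [hA_apply, if_pos rfl]
    linarith
  have hA_nonneg : ∀ a b, 0 ≤ A a b := fun a b => by
    rcases eq_or_ne a b with rfl | hab
    · exact (hA_diag a).le
    · simpa [hA_apply, hab] using hM a b hab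
  have hA_pos : ∀ a b, 0 < M a b → 0 < A a b := fun a b hab => by
    rcases eq_or_ne a b with rfl | hne
    · exact hA_diag a
    · simpa [hA_apply, hne] using hab
  obtain ⟨k, hk⟩ :=
    exists_pow_apply_pos_of_reflTransGen hA_nonneg (Relation.ReflTransGen.mono hA_pos _ _ h)
  have hM_eq : M = A + (-(c + 1)) • 1 := by simp only [A, neg_smul, add_neg_cancel_right]
  rw [hM_eq, exp_add_smul_one, smul_apply, smul_eq_mul, ← Real.exp_eq_exp_ℝ]
  exact mul_pos (Real.exp_pos _) (exp_apply_pos_of_pow_apply_pos hA_nonneg hk)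

end Matrix

theorem exp_neg_laplacian_pos_general
    {n : Type*} [Fintype n] [DecidableEq n]
    (w : n → n → ℝ) (hw : ∀ i j, 0 ≤ w i j) (hdiag : ∀ i, w i i = 0)
    (hconn : ∀ i j, Relation.ReflTransGen (fun a b => 0 < w a b) i j)
    (L : Matrix n n ℝ)
    (hL : ∀ i j, L i j = if i = j then ∑ k, w i k else -(w i j)) :
    ∀ i j, 0 < (NormedSpace.exp (-L)) i j := by
  intro i j
  refine Matrix.exp_apply_pos_of_reflTransGen (fun a b hab => ?_)
    (Relation.ReflTransGen.mono (fun a b hab => ?_) _ _ (hconn i j))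
  · simpa [hL, hab] using hw a b
  · have hne : a ≠ b := by rintro rfl; simp [hdiag] at hab
    simpa [hL, hne] using hab

/-- Every entry of the matrix exponential of the negated Laplacian of a
strongly connected weighted graph is strictly positive. -/
theorem exp_neg_laplacian_pos
    {n : Type*} [Fintype n] [Nonempty n] [DecidableEq n]
    (w : n → n → ℝ) (hw : ∀ i j, 0 ≤ w i j) (hdiag : ∀ i, w i i = 0)
    (hconn : ∀ i j, Relation.ReflTransGen (fun a b => 0 < w a b) i j)
    (L : Matrix n n ℝ)
    (hL : ∀ i j, L i j = if i = j then ∑ k, w i k else -(w i j)) :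
    ∀ i j, 0 < (NormedSpace.exp (-L)) i j :=
  exp_neg_laplacian_pos_general w hw hdiag hconn L hL
end
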